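/- arXiv:1602.07806 — 3 statements merged into one kernel-verified Lean document; each statement's English description precedes it below -/
import Mathlib

section
/- Let σ : ℝ^d → ℝ^{d×k} be bounded and Lipschitz with constant L_σ (i.e. |σ(x)| ≤ L_σ and |σ(x)-σ(y)| ≤ L_σ|x-y|), set A(x) = σ(x)σ(x)^T, and let α > 0. Suppose x̄ ≠ ȳ in ℝ^d and X, Y are symmetric d×d matrices satisfying the block inequality diag(X, -Y) ≤ D²φ_α(x̄,ȳ), where φ_α(x,y) = |x-y|^α. Then Tr(A(x̄)X - A(ȳ)Y) ≤ α(1 + |α-2|) L_σ² |x̄ - ȳ|^α. -/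
/-! Testing the block inequality against vectors `(p, q)` gives
`pᵀXp - qᵀYq ≤ c (p - q)ᵀ Z (p - q)` with `c = α |x̄ - ȳ|^(α-2)`, and `Z = I + (α - 2) n nᵀ` with
`|n| ≤ 1` satisfies `Z ≤ (1 + |α - 2|) I` by Cauchy–Schwarz. Summing over the columns `p, q` of `σ(x̄), σ(ȳ)` turns the
left side into `Tr(A(x̄)X - A(ȳ)Y)` and the right side into `c (1 + |α - 2|) |σ(x̄) - σ(ȳ)|²`,
which the Lipschitz bound controls by `c (1 + |α - 2|) L² |x̄ - ȳ|² = α (1 + |α - 2|) L² |x̄ - ȳ|^α`.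
-/

open Matrix

noncomputable def frobNorm {d k : ℕ} (M : Matrix (Fin d) (Fin k) ℝ) : ℝ :=
  Real.sqrt (∑ i, ∑ j, (M i j) ^ 2)

theorem sum_sq_le_of_frobNorm_le {d k : ℕ} {M : Matrix (Fin d) (Fin k) ℝ} {t : ℝ}
    (h : frobNorm M ≤ t) : ∑ i, ∑ j, M i j ^ 2 ≤ t ^ 2 :=
  (Real.sqrt_le_iff.mp h).2

theorem Real.rpow_sub_two_mul_sq {r : ℝ} (hr : 0 ≤ r) {α : ℝ} (hα : α ≠ 0) :
    r ^ (α - 2) * r ^ 2 = r ^ α := by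
  rw [← Real.rpow_natCast, ← Real.rpow_add' hr (by simpa using hα)]
  norm_num

theorem EuclideanSpace.ofLp_inv_norm_smul_dotProduct_self_le_one {ι : Type*} [Fintype ι]
    (v : EuclideanSpace ℝ ι) : (‖v‖⁻¹ • v).ofLp ⬝ᵥ (‖v‖⁻¹ • v).ofLp ≤ 1 := by
  have hinner := EuclideanSpace.inner_eq_star_dotProduct (‖v‖⁻¹ • v) (‖v‖⁻¹ • v)
  rw [star_trivial, real_inner_self_eq_norm_sq, norm_smul, norm_inv, norm_norm] at hinner
  rw [← hinner]
  exact pow_le_one₀ (by positivity) inv_mul_le_one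

section

variable {n m : Type*} [Fintype n] [Fintype m]

theorem dotProduct_one_add_smul_vecMulVec_self_mulVec_le [DecidableEq n] (β : ℝ) {u : n → ℝ}
    (hu : u ⬝ᵥ u ≤ 1) (w : n → ℝ) :
    w ⬝ᵥ ((1 + β • vecMulVec u u) *ᵥ w) ≤ (1 + |β|) * (w ⬝ᵥ w) := by
  have hcs : (u ⬝ᵥ w) ^ 2 ≤ w ⬝ᵥ w :=
    calc (u ⬝ᵥ w) ^ 2 ≤ (u ⬝ᵥ u) * (w ⬝ᵥ w) := by
          simpa only [dotProduct, sq] using Finset.sum_mul_sq_le_sq_mul_sq Finset.univ u w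
      _ ≤ w ⬝ᵥ w := mul_le_of_le_one_left (dotProduct_self_star_nonneg w) hu
  have hexpand : w ⬝ᵥ ((1 + β • vecMulVec u u) *ᵥ w) = w ⬝ᵥ w + β * (u ⬝ᵥ w) ^ 2 := by
    simp only [add_mulVec, one_mulVec, smul_mulVec, vecMulVec_mulVec, dotProduct_add,
      dotProduct_smul]
    simp [dotProduct_comm w u, sq]
  rw [hexpand]
  nlinarith [le_abs_self β, abs_nonneg β, sq_nonneg (u ⬝ᵥ w)]

theorem dotProduct_sub_le_of_posSemidef_fromBlocks_sub {M X Y : Matrix n n ℝ}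
    (h : (fromBlocks M (-M) (-M) M - fromBlocks X 0 0 (-Y)).PosSemidef) (p q : n → ℝ) :
    p ⬝ᵥ (X *ᵥ p) - q ⬝ᵥ (Y *ᵥ q) ≤ (p - q) ⬝ᵥ (M *ᵥ (p - q)) := by
  have := h.dotProduct_mulVec_nonneg (Sum.elim p q)
  simp only [star_trivial, sub_mulVec, fromBlocks_mulVec, Sum.elim_comp_inl, Sum.elim_comp_inr,
    sumElim_dotProduct_sumElim, zero_mulVec, neg_mulVec, mulVec_sub, add_zero, zero_add,
    dotProduct_add, dotProduct_sub, sub_dotProduct, dotProduct_neg] at this ⊢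
  linarith

theorem trace_mul_transpose_mul_eq_sum (σ : Matrix n m ℝ) (W : Matrix n n ℝ) :
    trace (σ * σᵀ * W) = ∑ j, σᵀ j ⬝ᵥ (W *ᵥ σᵀ j) := by
  rw [Matrix.mul_assoc, trace_mul_comm, Matrix.mul_assoc]
  simp only [trace, diag, mul_apply, dotProduct, mulVec, transpose_apply, Finset.mul_sum]

theorem trace_mul_transpose_sub_le {K : ℝ} {X Y : Matrix n n ℝ}
    (hXY : ∀ p q : n → ℝ, p ⬝ᵥ (X *ᵥ p) - q ⬝ᵥ (Y *ᵥ q) ≤ K * ((p - q) ⬝ᵥ (p - q)))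
    (σ τ : Matrix n m ℝ) :
    trace (σ * σᵀ * X - τ * τᵀ * Y) ≤ K * ∑ i, ∑ j, (σ - τ) i j ^ 2 := by
  rw [trace_sub, trace_mul_transpose_mul_eq_sum, trace_mul_transpose_mul_eq_sum,
    ← Finset.sum_sub_distrib, Finset.sum_comm, Finset.mul_sum]
  refine Finset.sum_le_sum fun j _ => (hXY _ _).trans_eq ?_
  simp [dotProduct, sq]

end

theorem stmt2_general {d k : ℕ} (α Lσ : ℝ) (hα : 0 < α)
    (σ : EuclideanSpace ℝ (Fin d) → Matrix (Fin d) (Fin k) ℝ)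
    (hσlip : ∀ x y, frobNorm (σ x - σ y) ≤ Lσ * ‖x - y‖)
    (A : EuclideanSpace ℝ (Fin d) → Matrix (Fin d) (Fin d) ℝ)
    (hA : ∀ x, A x = σ x * (σ x)ᵀ)
    (xb yb : EuclideanSpace ℝ (Fin d))
    (Z : Matrix (Fin d) (Fin d) ℝ)
    (hZ : ∀ i j, Z i j = (if i = j then (1 : ℝ) else 0) +
      (α - 2) * ((‖xb - yb‖⁻¹ • (xb - yb)) i) * ((‖xb - yb‖⁻¹ • (xb - yb)) j))
    (Hess : Matrix (Fin d ⊕ Fin d) (Fin d ⊕ Fin d) ℝ)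
    (hHess : Hess = Matrix.fromBlocks
      ((α * ‖xb - yb‖ ^ (α - 2)) • Z) (-((α * ‖xb - yb‖ ^ (α - 2)) • Z))
      (-((α * ‖xb - yb‖ ^ (α - 2)) • Z)) ((α * ‖xb - yb‖ ^ (α - 2)) • Z))
    (X Y : Matrix (Fin d) (Fin d) ℝ)
    (hle : (Hess - Matrix.fromBlocks X 0 0 (-Y)).PosSemidef) :
    Matrix.trace (A xb * X - A yb * Y) ≤ α * (1 + |α - 2|) * Lσ ^ 2 * ‖xb - yb‖ ^ α := by
  set r := ‖xb - yb‖
  set u := (r⁻¹ • (xb - yb)).ofLp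
  have hZ' : Z = 1 + (α - 2) • vecMulVec u u := by
    ext i j
    rw [hZ]
    simp [one_apply, vecMulVec_apply, mul_assoc]
  have hc : 0 ≤ α * r ^ (α - 2) := by positivity
  have hXY : ∀ p q : Fin d → ℝ, p ⬝ᵥ (X *ᵥ p) - q ⬝ᵥ (Y *ᵥ q)
      ≤ α * r ^ (α - 2) * (1 + |α - 2|) * ((p - q) ⬝ᵥ (p - q)) := by
    intro p q
    calc p ⬝ᵥ (X *ᵥ p) - q ⬝ᵥ (Y *ᵥ q)
        ≤ (p - q) ⬝ᵥ (((α * r ^ (α - 2)) • Z) *ᵥ (p - q)) :=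
          dotProduct_sub_le_of_posSemidef_fromBlocks_sub (hHess ▸ hle) p q
      _ = α * r ^ (α - 2) * ((p - q) ⬝ᵥ ((1 + (α - 2) • vecMulVec u u) *ᵥ (p - q))) := by
          rw [hZ', smul_mulVec, dotProduct_smul, smul_eq_mul]
      _ ≤ α * r ^ (α - 2) * (1 + |α - 2|) * ((p - q) ⬝ᵥ (p - q)) := by
          rw [mul_assoc _ (1 + _)]
          exact mul_le_mul_of_nonneg_left (dotProduct_one_add_smul_vecMulVec_self_mulVec_le _
            (EuclideanSpace.ofLp_inv_norm_smul_dotProduct_self_le_one _) _) hc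
  calc trace (A xb * X - A yb * Y)
      ≤ α * r ^ (α - 2) * (1 + |α - 2|) * ∑ i, ∑ j, (σ xb - σ yb) i j ^ 2 := by
        simpa only [hA] using trace_mul_transpose_sub_le hXY (σ xb) (σ yb)
    _ ≤ α * r ^ (α - 2) * (1 + |α - 2|) * (Lσ * r) ^ 2 := by
        gcongr
        exact sum_sq_le_of_frobNorm_le (hσlip xb yb)
    _ = α * (1 + |α - 2|) * Lσ ^ 2 * r ^ α := by
        rw [← Real.rpow_sub_two_mul_sq (norm_nonneg _) hα.ne']
        ring

/-- Key degenerate-ellipticity estimate (Lemma 2.2 of the paper): if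
diag(X, -Y) ≤ D²φ_α(xb,yb) (the explicitly computed Hessian of φ_α(x,y)=‖x-y‖^α),
A = σσᵀ with σ bounded and Lipschitz with constant L_σ, then
Tr(A(xb)X - A(yb)Y) ≤ α(1+|α-2|)L_σ²‖xb-yb‖^α. -/
theorem stmt2 {d k : ℕ} (α Lσ : ℝ) (hα : 0 < α) (hLσ : 0 ≤ Lσ)
    (σ : EuclideanSpace ℝ (Fin d) → Matrix (Fin d) (Fin k) ℝ)
    (hσbd : ∀ x, frobNorm (σ x) ≤ Lσ)
    (hσlip : ∀ x y, frobNorm (σ x - σ y) ≤ Lσ * ‖x - y‖)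
    (A : EuclideanSpace ℝ (Fin d) → Matrix (Fin d) (Fin d) ℝ)
    (hA : ∀ x, A x = σ x * (σ x)ᵀ)
    (xb yb : EuclideanSpace ℝ (Fin d)) (hxy : xb ≠ yb)
    (Z : Matrix (Fin d) (Fin d) ℝ)
    (hZ : ∀ i j, Z i j = (if i = j then (1 : ℝ) else 0) +
      (α - 2) * ((‖xb - yb‖⁻¹ • (xb - yb)) i) * ((‖xb - yb‖⁻¹ • (xb - yb)) j))
    (Hess : Matrix (Fin d ⊕ Fin d) (Fin d ⊕ Fin d) ℝ)
    (hHess : Hess = Matrix.fromBlocks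
      ((α * ‖xb - yb‖ ^ (α - 2)) • Z) (-((α * ‖xb - yb‖ ^ (α - 2)) • Z))
      (-((α * ‖xb - yb‖ ^ (α - 2)) • Z)) ((α * ‖xb - yb‖ ^ (α - 2)) • Z))
    (X Y : Matrix (Fin d) (Fin d) ℝ) (hX : X.IsSymm) (hY : Y.IsSymm)
    (hle : (Hess - Matrix.fromBlocks X 0 0 (-Y)).PosSemidef) :
    Matrix.trace (A xb * X - A yb * Y) ≤ α * (1 + |α - 2|) * Lσ ^ 2 * ‖xb - yb‖ ^ α :=
  stmt2_general α Lσ hα σ hσlip A hA xb yb Z hZ Hess hHess X Y hle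
end

section
/- Let m > 1 and ζ₁, ζ₂, b_m, K, L_H be as follows. Suppose H satisfies: μH(x, μ⁻¹p) - H(x,p) ≥ (1-μ)(b_m|p|^m - K) for μ ∈ (0,1), and H(y, p+q) - H(x,p) ≤ ζ₁(|x-y|)(1+|p|^m) + ζ₂(|q|)(1+|p|^{m-1}) for |q| ≤ 1, with moduli ζ₁, ζ₂. Then for all x, y, p, q with |q| ≤ 1 and all μ ∈ (0,1): μH(x, μ⁻¹p) - H(y, p+q) ≥ [(1-μ)b_m - ζ₁(|x-y|) - ((m-1)/m) ζ₂(|q|)^{m/(2(m-1))}]|p|^m - (1/m)ζ₂(|q|)^{m/2} - ζ₂(|q|) - K(1-μ) - ζ₁(|x-y|). -/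
/-!
Adding (H1) at `x` and (H2) leaves the cross term `ζ₂(|q|) |p|^{m-1}`. Writing it as
`(ζ₂(|q|)^{1/2} |p|^{m-1}) · ζ₂(|q|)^{1/2}` and applying Young's inequality with the conjugate
exponents `m / (m - 1)` and `m` trades it for a multiple of `|p|^m` plus a constant.
-/

namespace Real

lemma mul_rpow_sub_one_le_young {z r m : ℝ} (hz : 0 ≤ z) (hr : 0 ≤ r) (hm : 1 < m) :
    z * r ^ (m - 1) ≤ (m - 1) / m * z ^ (m / (2 * (m - 1))) * r ^ m + 1 / m * z ^ (m / 2) := by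
  have hm1 : m - 1 ≠ 0 := by linarith
  have young := young_inequality_of_nonneg
    (mul_nonneg (rpow_nonneg hz (1 / 2)) (rpow_nonneg hr (m - 1)))
    (rpow_nonneg hz (1 / 2)) (HolderConjugate.conjExponent hm).symm
  have hprod : z ^ ((1 : ℝ) / 2) * r ^ (m - 1) * z ^ ((1 : ℝ) / 2) = z * r ^ (m - 1) := by
    rw [mul_right_comm, ← rpow_add' hz (by norm_num)]
    norm_num
  have hfirst : (z ^ ((1 : ℝ) / 2) * r ^ (m - 1)) ^ (m / (m - 1))
      = z ^ (m / (2 * (m - 1))) * r ^ m := by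
    rw [mul_rpow (rpow_nonneg hz _) (rpow_nonneg hr _), ← rpow_mul hz, ← rpow_mul hr]
    congr 2 <;> field_simp
  have hsecond : (z ^ ((1 : ℝ) / 2)) ^ m = z ^ (m / 2) := by
    rw [← rpow_mul hz]
    ring_nf
  rw [conjExponent, hprod, hfirst, hsecond] at young
  calc z * r ^ (m - 1)
      ≤ z ^ (m / (2 * (m - 1))) * r ^ m / (m / (m - 1)) + z ^ (m / 2) / m := young
    _ = (m - 1) / m * z ^ (m / (2 * (m - 1))) * r ^ m + 1 / m * z ^ (m / 2) := by
      field_simp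

end Real

theorem stmt9_general {d : ℕ} (H : EuclideanSpace ℝ (Fin d) → EuclideanSpace ℝ (Fin d) → ℝ)
    (m K bm : ℝ) (hm : 1 < m)
    (ζ₁ ζ₂ : ℝ → ℝ)
    (hζ₂ : ∀ r, 0 ≤ ζ₂ r)
    (hH1 : ∀ μ ∈ Set.Ioo (0 : ℝ) 1, ∀ x p,
      μ * H x (μ⁻¹ • p) - H x p ≥ (1 - μ) * (bm * ‖p‖ ^ m - K))
    (hH2 : ∀ x y p q : EuclideanSpace ℝ (Fin d), ‖q‖ ≤ 1 →
      H y (p + q) - H x p ≤ ζ₁ ‖x - y‖ * (1 + ‖p‖ ^ m) + ζ₂ ‖q‖ * (1 + ‖p‖ ^ (m - 1))) :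
    ∀ x y p q : EuclideanSpace ℝ (Fin d), ‖q‖ ≤ 1 → ∀ μ ∈ Set.Ioo (0 : ℝ) 1,
      μ * H x (μ⁻¹ • p) - H y (p + q)
        ≥ ((1 - μ) * bm - ζ₁ ‖x - y‖
              - ((m - 1) / m) * (ζ₂ ‖q‖) ^ (m / (2 * (m - 1)))) * ‖p‖ ^ m
          - (1 / m) * (ζ₂ ‖q‖) ^ (m / 2) - ζ₂ ‖q‖
          - K * (1 - μ) - ζ₁ ‖x - y‖ := by
  intro x y p q hq μ hμ
  have coercive := hH1 μ hμ x p
  have shift := hH2 x y p q hq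
  have young := Real.mul_rpow_sub_one_le_young (hζ₂ ‖q‖) (norm_nonneg p) hm
  linear_combination coercive + shift + young

/-- Combination of (H1), (H2) and Young's inequality used in the comparison proof. -/
theorem stmt9 {d : ℕ} (H : EuclideanSpace ℝ (Fin d) → EuclideanSpace ℝ (Fin d) → ℝ)
    (m K bm LH : ℝ) (hm : 1 < m) (hK : 0 < K) (hbm : 0 < bm)
    (ζ₁ ζ₂ : ℝ → ℝ)
    (hζ₁ : ∀ r, 0 ≤ ζ₁ r) (hζ₂ : ∀ r, 0 ≤ ζ₂ r)
    (hH1 : ∀ μ ∈ Set.Ioo (0 : ℝ) 1, ∀ x p,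
      μ * H x (μ⁻¹ • p) - H x p ≥ (1 - μ) * (bm * ‖p‖ ^ m - K))
    (hH2 : ∀ x y p q : EuclideanSpace ℝ (Fin d), ‖q‖ ≤ 1 →
      H y (p + q) - H x p ≤ ζ₁ ‖x - y‖ * (1 + ‖p‖ ^ m) + ζ₂ ‖q‖ * (1 + ‖p‖ ^ (m - 1))) :
    ∀ x y p q : EuclideanSpace ℝ (Fin d), ‖q‖ ≤ 1 → ∀ μ ∈ Set.Ioo (0 : ℝ) 1,
      μ * H x (μ⁻¹ • p) - H y (p + q)
        ≥ ((1 - μ) * bm - ζ₁ ‖x - y‖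
              - ((m - 1) / m) * (ζ₂ ‖q‖) ^ (m / (2 * (m - 1)))) * ‖p‖ ^ m
          - (1 / m) * (ζ₂ ‖q‖) ^ (m / 2) - ζ₂ ‖q‖
          - K * (1 - μ) - ζ₁ ‖x - y‖ :=
  stmt9_general H m K bm hm ζ₁ ζ₂ hζ₂ hH1 hH2
end

section
/- Let g : ℝ^d × ℝ^d → ℝ be measurable, L > 1, b ∈ (0,1), C₁, C₂ > 0, P ⊂ ℝ^d measurable, and x̄, ȳ ∈ ℝ^d with |x̄ - ȳ| ≤ 1. Assume for all z ∈ P: |g(x̄,z) - g(ȳ,z)| ≤ C₁(L|x̄-ȳ| + b)|z| and |g(x̄,z)|, |g(ȳ,z)| ≤ min{C₂, C₁(L+b)|z|}. Then there exists C₃ depending only on C₁, C₂ such that for all z ∈ P: e^{g(x̄,z)} - e^{g(ȳ,z)} ≤ g(x̄,z) - g(ȳ,z) + C₃(L²|x̄-ȳ| + Lb)|z|². -/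
/-!
By convexity of `exp`, `e^a - e^β ≤ e^a (a - β)`, so
`e^a - e^β - (a - β) ≤ (e^a - 1)(a - β) ≤ e^{|a|} |a| |a - β|`.
With `a = g(x̄, z)`, `β = g(ȳ, z)` the hypotheses bound `e^{|a|}` by `e^{C₂}`, `|a|` by
`C₁ (L + b) |z|` and `|a - β|` by `C₁ (L |x̄ - ȳ| + b) |z|`, and `(L + b)(L t + b) ≤ 2 (L² t + L b)`
because `b ≤ L`. Hence `C₃ = 2 C₁² e^{C₂}` works.
-/

namespace Real

theorem exp_sub_exp_le_exp_mul_sub (a b : ℝ) : exp a - exp b ≤ exp a * (a - b) := by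
  have h := mul_le_mul_of_nonneg_left (add_one_le_exp (b - a)) (exp_pos a).le
  rw [← exp_add, add_sub_cancel] at h
  linarith

theorem abs_exp_sub_one_le_mul_exp_abs (x : ℝ) : |exp x - 1| ≤ |x| * exp |x| := by
  rcases le_or_gt 0 x with hx | hx
  · have h := exp_sub_exp_le_exp_mul_sub x 0
    rw [exp_zero, sub_zero] at h
    rw [abs_of_nonneg hx, abs_of_nonneg (sub_nonneg.2 (one_le_exp hx))]
    linarith
  · rw [abs_of_neg hx, abs_of_neg (sub_neg.2 (exp_lt_one_iff.2 hx))]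
    calc -(exp x - 1) ≤ -x := by linarith [add_one_le_exp x]
      _ ≤ -x * exp (-x) := le_mul_of_one_le_right (by linarith) (one_le_exp (by linarith))

theorem exp_sub_exp_sub_le (a b : ℝ) :
    exp a - exp b - (a - b) ≤ exp |a| * |a| * |a - b| :=
  calc exp a - exp b - (a - b) ≤ (exp a - 1) * (a - b) := by
        linarith [exp_sub_exp_le_exp_mul_sub a b]
    _ ≤ |exp a - 1| * |a - b| := by rw [← abs_mul]; exact le_abs_self _
    _ ≤ |a| * exp |a| * |a - b| := by
        gcongr; exact abs_exp_sub_one_le_mul_exp_abs a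
    _ = exp |a| * |a| * |a - b| := by ring

end Real

theorem add_mul_mul_add_le_two_mul {L b t : ℝ} (hb : 0 ≤ b) (hbL : b ≤ L) (ht : 0 ≤ t) :
    (L + b) * (L * t + b) ≤ 2 * (L ^ 2 * t + L * b) :=
  calc (L + b) * (L * t + b) ≤ (2 * L) * (L * t + b) := by
        gcongr
        · have := hb.trans hbL
          positivity
        · linarith
    _ = 2 * (L ^ 2 * t + L * b) := by ring

/-- Exponential linearization lemma (Lemma A.2 of the paper): there exists C₃
depending only on C₁, C₂ such that
e^{g(x̄,z)} - e^{g(ȳ,z)} ≤ g(x̄,z) - g(ȳ,z) + C₃(L²‖x̄-ȳ‖ + Lb)‖z‖² on P. -/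
theorem stmt12 {d : ℕ} :
    ∀ C₁ C₂ : ℝ, 0 < C₁ → 0 < C₂ →
    ∃ C₃ > (0 : ℝ),
      ∀ (g : EuclideanSpace ℝ (Fin d) → EuclideanSpace ℝ (Fin d) → ℝ)
        (L b : ℝ), 1 < L → b ∈ Set.Ioo (0 : ℝ) 1 →
        ∀ (P : Set (EuclideanSpace ℝ (Fin d)))
          (xb yb : EuclideanSpace ℝ (Fin d)), ‖xb - yb‖ ≤ 1 →
          (∀ z ∈ P, |g xb z - g yb z| ≤ C₁ * (L * ‖xb - yb‖ + b) * ‖z‖) →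
          (∀ z ∈ P, |g xb z| ≤ min C₂ (C₁ * (L + b) * ‖z‖)
            ∧ |g yb z| ≤ min C₂ (C₁ * (L + b) * ‖z‖)) →
          ∀ z ∈ P, Real.exp (g xb z) - Real.exp (g yb z)
            ≤ g xb z - g yb z + C₃ * (L ^ 2 * ‖xb - yb‖ + L * b) * ‖z‖ ^ 2 := by
  intro C₁ C₂ hC₁ _
  refine ⟨2 * C₁ ^ 2 * Real.exp C₂, by positivity, ?_⟩
  intro g L b hL ⟨hb, hb1⟩ P xb yb _ hdiff hbound z hz
  set a := g xb z
  set β := g yb z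
  set t := ‖xb - yb‖
  have ha := (hbound z hz).1
  have hexp : Real.exp |a| ≤ Real.exp C₂ := Real.exp_le_exp.2 (ha.trans (min_le_left _ _))
  calc Real.exp a - Real.exp β ≤ a - β + Real.exp |a| * |a| * |a - β| := by
        linarith [Real.exp_sub_exp_sub_le a β]
    _ ≤ a - β + Real.exp C₂ * (C₁ * (L + b) * ‖z‖) * (C₁ * (L * t + b) * ‖z‖) := by
        gcongr
        · exact ha.trans (min_le_right _ _)
        · exact hdiff z hz
    _ = a - β + C₁ ^ 2 * Real.exp C₂ * ‖z‖ ^ 2 * ((L + b) * (L * t + b)) := by ring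
    _ ≤ a - β + C₁ ^ 2 * Real.exp C₂ * ‖z‖ ^ 2 * (2 * (L ^ 2 * t + L * b)) := by
        gcongr a - β + C₁ ^ 2 * Real.exp C₂ * ‖z‖ ^ 2 * ?_
        exact add_mul_mul_add_le_two_mul hb.le (hb1.trans hL).le (norm_nonneg (xb - yb))
    _ = a - β + 2 * C₁ ^ 2 * Real.exp C₂ * (L ^ 2 * t + L * b) * ‖z‖ ^ 2 := by ring
end
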